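/- arXiv:1804.03590 — 2 statements merged into one kernel-verified Lean document; each statement's English description precedes it below -/
import Mathlib

section
/- Let F_3 ⊂ P^2(C) be the nine points [1, −ω^a, 0], [1, 0, −ω^a], [0, 1, −ω^a] for a ∈ {0,1,2}, where ω is a primitive cube root of unity. Then every line containing at least two points of F_3 contains exactly three points of F_3; in particular F_3 has exactly twelve 3-rich lines, no simple lines, and no k-rich lines with k ≥ 4. -/
open MvPolynomial

noncomputable section

abbrev P2 := Projectivization ℂ (Fin 3 → ℂ)

/-- A projective line in `P2`, given as the zero set of a nonzero linear form. -/
def IsLine (S : Set P2) : Prop :=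
  ∃ f : (Fin 3 → ℂ) →ₗ[ℂ] ℂ, f ≠ 0 ∧ S = {p : P2 | f p.rep = 0}

/-- Three points of `P2` are collinear if some line contains all of them. -/
def Collinear3 (p q r : P2) : Prop :=
  ∃ S : Set P2, IsLine S ∧ p ∈ S ∧ q ∈ S ∧ r ∈ S

/-- A point of `P2` from homogeneous coordinates. -/
def pt (v : Fin 3 → ℂ) (h : v ≠ 0) : P2 := Projectivization.mk ℂ v h

/-- Two sets of points of `P2` are projectively equivalent if a linear automorphism
of `ℂ³` carries one onto the other. -/
def ProjEquiv (A B : Set P2) : Prop :=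
  ∃ g : (Fin 3 → ℂ) ≃ₗ[ℂ] (Fin 3 → ℂ),
    B = Projectivization.map (g : (Fin 3 → ℂ) →ₗ[ℂ] (Fin 3 → ℂ)) g.injective '' A


/-- The dual Fermat configuration `F₃`: the nine points
`[1, -ω^a, 0]`, `[1, 0, -ω^a]`, `[0, 1, -ω^a]` for `a = 0, 1, 2`. -/
def F3 (ω : ℂ) : Set P2 :=
  ⋃ a : Fin 3,
    ({pt ![1, -ω ^ (a : ℕ), 0] (by intro h; simpa using congrFun h 0),
      pt ![1, 0, -ω ^ (a : ℕ)] (by intro h; simpa using congrFun h 0),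
      pt ![0, 1, -ω ^ (a : ℕ)] (by intro h; simpa using congrFun h 1)} : Set P2)

/-!
Write a line as `c₀ x + c₁ y + c₂ z = 0`. The point `[1, -ω^a, 0]` lies on it iff `c₀ = ω^a c₁`,
and for a fixed pair `(c₀, c₁)` this holds for all three `a` if `c₀ = c₁ = 0`, for exactly one `a`
if `c₀³ = c₁³ ≠ 0`, and for none otherwise; likewise for the other two families of points. So the
number of points of `F₃` on the line is a sum of three such counts, one per pair of coefficients.
Since equality of cubes is transitive, this sum is `0`, `1` or `3`, and it is `3` exactly on the
three coordinate lines and the nine lines `ω^a x + ω^b y + z = 0`, which are pairwise distinct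
because their coefficient vectors are not proportional.
-/

open Finset
open scoped LinearAlgebra.Projectivization

section RootCount

variable {K : Type*} [Field K] [DecidableEq K] {n : ℕ} {ω : K}

def ratioCount (n : ℕ) (u v : K) : ℕ :=
  if u = 0 ∧ v = 0 then n else if u ^ n = v ^ n then 1 else 0

theorem card_filter_eq_pow_mul [NeZero n] (hω : IsPrimitiveRoot ω n) (u v : K) :
    #{a : Fin n | u = ω ^ (a : ℕ) * v} = ratioCount n u v := by
  unfold ratioCount
  by_cases hv : v = 0
  · by_cases hu : u = 0
    · simp [hu, hv]
    · simp [hu, hv, NeZero.ne n]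
  · have hiff : ∀ a : Fin n, u = ω ^ (a : ℕ) * v ↔ ω ^ (a : ℕ) = u / v := fun a => by
      rw [eq_div_iff hv, eq_comm]
    have hpow : u ^ n = v ^ n ↔ (u / v) ^ n = 1 := by
      rw [div_pow, div_eq_one_iff_eq (pow_ne_zero n hv)]
    simp only [hv, and_false, if_false, hiff, hpow]
    split_ifs with h
    · obtain ⟨i, hi, hωi⟩ := hω.eq_pow_of_pow_eq_one h
      rw [Finset.card_eq_one]
      refine ⟨⟨i, hi⟩, Finset.ext fun a => ?_⟩
      simp only [Finset.mem_filter_univ, Finset.mem_singleton, ← hωi]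
      exact ⟨fun ha => Fin.ext (hω.pow_inj a.isLt hi ha), fun ha => ha ▸ rfl⟩
    · rw [Finset.card_eq_zero, Finset.filter_eq_empty_iff]
      rintro a - ha
      exact h (by rw [← ha, ← pow_mul, mul_comm, pow_mul, hω.pow_eq_one, one_pow])

theorem ratioCount_add_add_le_one_or_eq_three {c : Fin 3 → K} (hc : c ≠ 0) :
    let s := ratioCount 3 (c 0) (c 1) + ratioCount 3 (c 0) (c 2) + ratioCount 3 (c 1) (c 2)
    s ≤ 1 ∨ s = 3 ∧ ((c 0 = 0 ∧ c 1 = 0) ∨ (c 0 = 0 ∧ c 2 = 0) ∨ (c 1 = 0 ∧ c 2 = 0) ∨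
      (c 0 ^ 3 = c 2 ^ 3 ∧ c 1 ^ 3 = c 2 ^ 3 ∧ c 2 ≠ 0)) := by
  intro s
  have hc' : ¬(c 0 = 0 ∧ c 1 = 0 ∧ c 2 = 0) := fun h =>
    hc (funext fun i => by fin_cases i <;> simp [h])
  simp only [s, ratioCount]
  split_ifs <;> grind

end RootCount

section ZeroLocus

variable {ι K : Type*} [Fintype ι] [Field K]

def linearZeroLocus (c : ι → K) : Set (ℙ K (ι → K)) := {p | c ⬝ᵥ p.rep = 0}

theorem mk_mem_linearZeroLocus {c v : ι → K} (hv : v ≠ 0) :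
    Projectivization.mk K v hv ∈ linearZeroLocus c ↔ c ⬝ᵥ v = 0 := by
  obtain ⟨a, ha⟩ := Projectivization.exists_smul_eq_mk_rep K v hv
  simp [linearZeroLocus, ← ha, dotProduct_smul, smul_eq_zero_iff_eq]

theorem linearZeroLocus_smul {t : K} (ht : t ≠ 0) (c : ι → K) :
    linearZeroLocus (t • c) = linearZeroLocus c := by
  ext p
  simp [linearZeroLocus, smul_dotProduct, ht]

theorem exists_eq_smul_of_linearZeroLocus_subset [DecidableEq ι] {c d : ι → K}
    (h : linearZeroLocus d ⊆ linearZeroLocus c) : ∃ t : K, c = t • d := by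
  let e := dotProductEquiv K ι
  have hker : ⨅ _ : Unit, LinearMap.ker (e d) ≤ LinearMap.ker (e c) := by
    intro v hv
    simp only [Submodule.mem_iInf, LinearMap.mem_ker, dotProductEquiv_apply_apply, e] at hv ⊢
    by_cases hv0 : v = 0
    · simp [hv0]
    · exact (mk_mem_linearZeroLocus hv0).1 (h ((mk_mem_linearZeroLocus hv0).2 (hv ())))
  obtain ⟨t, ht⟩ := Submodule.mem_span_singleton.1
    (by simpa using mem_span_of_iInf_ker_le_ker hker)
  exact ⟨t, e.injective (by rw [map_smul, ht])⟩

theorem linearZeroLocus_eq_single [DecidableEq ι] {c : ι → K} (hc : c ≠ 0) {j : ι}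
    (hj : ∀ k ≠ j, c k = 0) : linearZeroLocus c = linearZeroLocus (Pi.single j 1) := by
  have hcj : c = c j • Pi.single j 1 := by
    ext k
    by_cases hk : k = j
    · simp [hk]
    · simp [hk, hj k hk]
  rw [hcj, linearZeroLocus_smul]
  exact fun h => hc (by rw [hcj, h, zero_smul])

end ZeroLocus

theorem isLine_iff {S : Set P2} : IsLine S ↔ ∃ c ≠ 0, S = linearZeroLocus c := by
  let e := dotProductEquiv ℂ (Fin 3)
  constructor
  · rintro ⟨f, hf, rfl⟩
    obtain ⟨c, rfl⟩ := e.surjective f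
    exact ⟨c, by simpa using hf, rfl⟩
  · rintro ⟨c, hc, rfl⟩
    exact ⟨e c, by simpa using hc, rfl⟩

section Fermat

variable {ω : ℂ}

def fermatVec (ω : ℂ) : Fin 3 × Fin 3 → Fin 3 → ℂ
  | (i, a) => ![![1, -ω ^ (a : ℕ), 0], ![1, 0, -ω ^ (a : ℕ)], ![0, 1, -ω ^ (a : ℕ)]] i

theorem fermatVec_ne_zero (ω : ℂ) (x : Fin 3 × Fin 3) : fermatVec ω x ≠ 0 := by
  obtain ⟨i, a⟩ := x
  fin_cases i <;> simp [fermatVec, funext_iff, Fin.forall_fin_succ]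

def fermatPoint (ω : ℂ) (x : Fin 3 × Fin 3) : P2 := pt (fermatVec ω x) (fermatVec_ne_zero ω x)

theorem F3_eq_range (ω : ℂ) : F3 ω = Set.range (fermatPoint ω) := by
  ext p
  simp only [F3, Set.mem_iUnion, Set.mem_insert_iff, Set.mem_singleton_iff, Set.mem_range,
    Prod.exists]
  rw [exists_comm]
  simp only [Fin.exists_fin_succ, IsEmpty.exists_iff, or_false, @eq_comm _ p]
  rfl

theorem fermatPoint_injective (hω : IsPrimitiveRoot ω 3) :
    Function.Injective (fermatPoint ω) := by
  have hω0 : ω ≠ 0 := hω.ne_zero three_ne_zero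
  have hpow (a b : Fin 3) : ω ^ (a : ℕ) = ω ^ (b : ℕ) ↔ a = b :=
    ⟨fun h => Fin.ext (hω.pow_inj a.isLt b.isLt h), fun h => h ▸ rfl⟩
  rintro ⟨i, a⟩ ⟨j, b⟩ h
  obtain ⟨t, ht⟩ := (Projectivization.mk_eq_mk_iff' ..).1 h
  have h0 := congrFun ht 0
  have h1 := congrFun ht 1
  have h2 := congrFun ht 2
  fin_cases i <;> fin_cases j <;> simp [fermatVec, hω0] at h0 h1 h2 <;> simp_all [eq_comm]

theorem fermatPoint_mem_linearZeroLocus {c : Fin 3 → ℂ} {i a : Fin 3} :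
    fermatPoint ω (i, a) ∈ linearZeroLocus c ↔
      c (![0, 0, 1] i) = ω ^ (a : ℕ) * c (![1, 2, 2] i) := by
  rw [fermatPoint, pt, mk_mem_linearZeroLocus]
  fin_cases i <;> simp [fermatVec, dotProduct, Fin.sum_univ_three, add_neg_eq_zero, mul_comm]

theorem ncard_F3_inter_linearZeroLocus (hω : IsPrimitiveRoot ω 3) (c : Fin 3 → ℂ) :
    (F3 ω ∩ linearZeroLocus c).ncard =
      ratioCount 3 (c 0) (c 1) + ratioCount 3 (c 0) (c 2) + ratioCount 3 (c 1) (c 2) := by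
  have hpre : fermatPoint ω ⁻¹' linearZeroLocus c =
      ↑({x | c (![0, 0, 1] x.1) = ω ^ (x.2 : ℕ) * c (![1, 2, 2] x.1)} :
        Finset (Fin 3 × Fin 3)) := by
    ext ⟨i, a⟩
    simp [fermatPoint_mem_linearZeroLocus]
  rw [F3_eq_range, ← Set.image_univ, ← Set.image_inter_preimage, Set.univ_inter,
    Set.ncard_image_of_injective _ (fermatPoint_injective hω), hpre, Set.ncard_coe_finset,
    card_filter, Fintype.sum_prod_type, Fin.sum_univ_three]
  simp only [← card_filter, card_filter_eq_pow_mul hω]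
  rfl

def richLine (ω : ℂ) : Fin 3 ⊕ Fin 3 × Fin 3 → Fin 3 → ℂ
  | .inl j => Pi.single j 1
  | .inr (a, b) => ![ω ^ (a : ℕ), ω ^ (b : ℕ), 1]

theorem richLine_ne_zero (ω : ℂ) (i : Fin 3 ⊕ Fin 3 × Fin 3) : richLine ω i ≠ 0 := by
  rcases i with j | ⟨a, b⟩
  · simp [richLine]
  · intro h
    simpa [richLine] using congrFun h 2

theorem ncard_F3_inter_richLine (hω : IsPrimitiveRoot ω 3) (i : Fin 3 ⊕ Fin 3 × Fin 3) :
    (F3 ω ∩ linearZeroLocus (richLine ω i)).ncard = 3 := by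
  have hcube (a : ℕ) : (ω ^ a) ^ 3 = 1 := by
    rw [← pow_mul, mul_comm, pow_mul, hω.pow_eq_one, one_pow]
  rw [ncard_F3_inter_linearZeroLocus hω]
  rcases i with j | ⟨a, b⟩
  · fin_cases j <;> simp [richLine, ratioCount]
  · simp [richLine, ratioCount, hcube, hω.ne_zero three_ne_zero]

theorem linearZeroLocus_richLine_injective (hω : IsPrimitiveRoot ω 3) :
    Function.Injective (linearZeroLocus ∘ richLine ω) := by
  have hω0 : ω ≠ 0 := hω.ne_zero three_ne_zero
  have hpow (a b : Fin 3) : ω ^ (a : ℕ) = ω ^ (b : ℕ) ↔ a = b :=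
    ⟨fun h => Fin.ext (hω.pow_inj a.isLt b.isLt h), fun h => h ▸ rfl⟩
  intro i i' h
  obtain ⟨t, ht⟩ := exists_eq_smul_of_linearZeroLocus_subset h.ge
  have h0 := congrFun ht 0
  have h1 := congrFun ht 1
  have h2 := congrFun ht 2
  clear h ht
  rcases i with j | ⟨a, b⟩ <;> rcases i' with k | ⟨a', b'⟩
  · fin_cases j <;> fin_cases k <;> simp [richLine] at h0 h1 h2 ⊢
  · fin_cases j <;> simp [richLine, hω0] at h0 h1 h2 <;> grind
  · fin_cases k <;> simp [richLine, hω0] at h0 h1 h2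
  · simp [richLine] at h0 h1 h2
    subst h2
    simp_all

theorem exists_richLine (hω : IsPrimitiveRoot ω 3) {c : Fin 3 → ℂ} (hc : c ≠ 0)
    (h3 : (F3 ω ∩ linearZeroLocus c).ncard = 3) :
    ∃ i, linearZeroLocus c = linearZeroLocus (richLine ω i) := by
  rw [ncard_F3_inter_linearZeroLocus hω] at h3
  obtain h | ⟨-, h01 | h02 | h12 | ⟨h0, h1, h2⟩⟩ := ratioCount_add_add_le_one_or_eq_three hc
  · omega
  · exact ⟨.inl 2, linearZeroLocus_eq_single hc fun k hk => by fin_cases k <;> simp_all⟩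
  · exact ⟨.inl 1, linearZeroLocus_eq_single hc fun k hk => by fin_cases k <;> simp_all⟩
  · exact ⟨.inl 0, linearZeroLocus_eq_single hc fun k hk => by fin_cases k <;> simp_all⟩
  · have hroot {u : ℂ} (hu : u ^ 3 = c 2 ^ 3) : ∃ a : Fin 3, ω ^ (a : ℕ) = u / c 2 := by
      obtain ⟨a, ha, hωa⟩ := hω.eq_pow_of_pow_eq_one (ξ := u / c 2)
        (by rw [div_pow, hu, div_self (pow_ne_zero 3 h2)])
      exact ⟨⟨a, ha⟩, hωa⟩
    obtain ⟨a, ha⟩ := hroot h0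
    obtain ⟨b, hb⟩ := hroot h1
    refine ⟨.inr (a, b), ?_⟩
    have hcab : c = c 2 • richLine ω (.inr (a, b)) := by
      ext j
      fin_cases j <;> simp [richLine, ha, hb, mul_div_cancel₀ _ h2]
    rw [hcab, linearZeroLocus_smul h2]

theorem ncard_F3 (hω : IsPrimitiveRoot ω 3) : (F3 ω).ncard = 9 := by
  rw [F3_eq_range, Set.ncard_range_of_injective (fermatPoint_injective hω)]
  simp

theorem ncard_F3_inter_le_one_or_eq_three (hω : IsPrimitiveRoot ω 3) {S : Set P2}
    (hS : IsLine S) : (F3 ω ∩ S).ncard ≤ 1 ∨ (F3 ω ∩ S).ncard = 3 := by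
  obtain ⟨c, hc, rfl⟩ := isLine_iff.1 hS
  rw [ncard_F3_inter_linearZeroLocus hω]
  exact (ratioCount_add_add_le_one_or_eq_three hc).imp_right And.left

theorem setOf_isLine_ncard_F3_inter_eq_three (hω : IsPrimitiveRoot ω 3) :
    {S : Set P2 | IsLine S ∧ (F3 ω ∩ S).ncard = 3} =
      Set.range (linearZeroLocus ∘ richLine ω) := by
  ext S
  constructor
  · rintro ⟨hS, h3⟩
    obtain ⟨c, hc, rfl⟩ := isLine_iff.1 hS
    obtain ⟨i, hi⟩ := exists_richLine hω hc h3
    exact ⟨i, hi.symm⟩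
  · rintro ⟨i, rfl⟩
    exact ⟨isLine_iff.2 ⟨_, richLine_ne_zero ω i, rfl⟩, ncard_F3_inter_richLine hω i⟩

end Fermat

/-- The dual Fermat configuration `F₃` consists of nine points; every line containing
at least two of its points contains exactly three of them; it has exactly twelve
3-rich lines, no simple lines, and no `k`-rich lines with `k ≥ 4`. -/
theorem stmt18 (ω : ℂ) (hω : IsPrimitiveRoot ω 3) :
    (F3 ω).ncard = 9 ∧
    (∀ S : Set P2, IsLine S → 2 ≤ (F3 ω ∩ S).ncard → (F3 ω ∩ S).ncard = 3) ∧
    {S : Set P2 | IsLine S ∧ (F3 ω ∩ S).ncard = 3}.ncard = 12 ∧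
    (∀ S : Set P2, IsLine S → (F3 ω ∩ S).ncard ≠ 2) ∧
    (∀ S : Set P2, IsLine S → ∀ k : ℕ, 4 ≤ k → (F3 ω ∩ S).ncard ≠ k) := by
  have h13 := fun S (hS : IsLine S) => ncard_F3_inter_le_one_or_eq_three hω hS
  refine ⟨ncard_F3 hω, fun S hS _ => ?_, ?_, fun S hS => ?_, fun S hS k hk => ?_⟩
  · have := h13 S hS
    omega
  · rw [setOf_isLine_ncard_F3_inter_eq_three hω,
      Set.ncard_range_of_injective (linearZeroLocus_richLine_injective hω)]
    simp
  · have := h13 S hS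
    omega
  · have := h13 S hS
    omega
end
end

section
/- Let Z be a set of 9 points in P^2(C) containing exactly one line L with |L ∩ Z| = 4 and no line containing 5 or more points of Z, and suppose no three of the remaining 5 points R = Z \ L are collinear. Write L ∩ Z = {Z1,Z2,Z3,Z4}. Then there exist two points of R whose joining line meets L outside of Z. -/
open MvPolynomial

noncomputable section

/-!
Suppose every line through two points of `R = Z \ L` met `L` inside `Z`. Colour each of the
`10` pairs of points of `R` by the point of `Z ∩ L` on its line. Two pairs of the same colour `x`
cannot share a point `p`: both would lie on the line `px`, giving three collinear points of `R`.
So each of the `4` colours is carried by at most `⌊5/2⌋ = 2` pairs, which accounts for only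
`8 < 10` pairs.
-/

namespace Finset

variable {α β : Type*} [DecidableEq α]

theorem mul_card_le_card_of_pairwiseDisjoint {k : ℕ} {s : Finset α} {F : Finset (Finset α)}
    (hsub : ∀ e ∈ F, e ⊆ s) (hcard : ∀ e ∈ F, e.card = k)
    (hdisj : (F : Set (Finset α)).PairwiseDisjoint id) : k * F.card ≤ s.card :=
  calc k * F.card = ∑ e ∈ F, e.card := by simp [sum_congr rfl hcard, mul_comm]
    _ = (F.biUnion id).card := (card_biUnion hdisj).symm
    _ ≤ s.card := card_le_card (biUnion_subset.2 hsub)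

theorem card_le_div_mul_card_of_pairwiseDisjoint_fibers [DecidableEq β] {k : ℕ} (hk : 0 < k)
    {s : Finset α} {E : Finset (Finset α)} {t : Finset β} {c : Finset α → β}
    (hsub : ∀ e ∈ E, e ⊆ s) (hcard : ∀ e ∈ E, e.card = k) (hc : ∀ e ∈ E, c e ∈ t)
    (hdisj : ∀ b ∈ t, ({e ∈ E | c e = b} : Set (Finset α)).PairwiseDisjoint id) :
    E.card ≤ s.card / k * t.card :=
  card_le_mul_card_image_of_maps_to hc _ fun b hb => by
    rw [Nat.le_div_iff_mul_le hk, mul_comm]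
    exact mul_card_le_card_of_pairwiseDisjoint (fun e he => hsub e (mem_filter.1 he).1)
      (fun e he => hcard e (mem_filter.1 he).1) (by simpa using hdisj b hb)

end Finset

open Projectivization Module

theorem linearIndependent_rep_pair {p q : P2} (hpq : p ≠ q) :
    LinearIndependent ℂ ![p.rep, q.rep] := by
  have h := (independent_pair_iff_ne p q).2 hpq
  rw [independent_iff] at h
  rwa [show Projectivization.rep ∘ ![p, q] = ![p.rep, q.rep] by ext i; fin_cases i <;> rfl] at h

theorem ker_eq_span_rep_pair {f : (Fin 3 → ℂ) →ₗ[ℂ] ℂ} (hf : f ≠ 0) {p q : P2} (hpq : p ≠ q)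
    (hp : f p.rep = 0) (hq : f q.rep = 0) :
    LinearMap.ker f = Submodule.span ℂ (Set.range ![p.rep, q.rep]) := by
  have hker := Module.Dual.finrank_ker_add_one_of_ne_zero (f := f) hf
  rw [finrank_fin_fun] at hker
  refine (Submodule.eq_of_le_of_finrank_eq ?_ ?_).symm
  · rw [Submodule.span_le, Set.range_subset_iff]
    intro i
    fin_cases i
    exacts [hp, hq]
  · rw [finrank_span_eq_card (linearIndependent_rep_pair hpq)]
    simp only [Fintype.card_fin]
    omega

theorem IsLine.eq_of_mem {S₁ S₂ : Set P2} (h₁ : IsLine S₁) (h₂ : IsLine S₂) {p q : P2}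
    (hpq : p ≠ q) (hp₁ : p ∈ S₁) (hq₁ : q ∈ S₁) (hp₂ : p ∈ S₂) (hq₂ : q ∈ S₂) : S₁ = S₂ := by
  obtain ⟨f, hf, rfl⟩ := h₁
  obtain ⟨g, hg, rfl⟩ := h₂
  have hfg := (ker_eq_span_rep_pair hf hpq hp₁ hq₁).trans
    (ker_eq_span_rep_pair hg hpq hp₂ hq₂).symm
  ext r
  exact SetLike.ext_iff.1 hfg r.rep

theorem exists_isLine_mem_mem (p q : P2) : ∃ S, IsLine S ∧ p ∈ S ∧ q ∈ S := by
  have hlt : Submodule.span ℂ (Set.range ![p.rep, q.rep]) < ⊤ := by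
    apply Submodule.lt_top_of_finrank_lt_finrank
    calc _ ≤ Fintype.card (Fin 2) := finrank_range_le_card (R := ℂ) _
      _ < finrank ℂ (Fin 3 → ℂ) := by simp
  obtain ⟨f, hf, hle⟩ := Submodule.exists_le_ker_of_lt_top _ hlt
  exact ⟨_, ⟨f, hf, rfl⟩, hle (Submodule.subset_span ⟨0, rfl⟩),
    hle (Submodule.subset_span ⟨1, rfl⟩)⟩

section NoThreeCollinear

variable {R : Set P2}
  (hR : ∀ p ∈ R, ∀ q ∈ R, ∀ r ∈ R, p ≠ q → p ≠ r → q ≠ r → ¬ Collinear3 p q r)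
include hR

theorem card_le_two_of_subset_isLine {S : Set P2} (hS : IsLine S) {s : Finset P2}
    (hsR : ↑s ⊆ R) (hsS : ↑s ⊆ S) : s.card ≤ 2 := by
  by_contra! h
  obtain ⟨a, ha, b, hb, c, hc, hab, hac, hbc⟩ := Finset.two_lt_card.1 h
  exact hR a (hsR ha) b (hsR hb) c (hsR hc) hab hac hbc ⟨S, hS, hsS ha, hsS hb, hsS hc⟩

theorem eq_of_card_eq_two_of_subset_isLine {S : Set P2} (hS : IsLine S)
    {e e' : Finset P2} (heR : ↑e ⊆ R) (he'R : ↑e' ⊆ R) (heS : ↑e ⊆ S) (he'S : ↑e' ⊆ S)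
    (he : e.card = 2) (he' : e'.card = 2) : e = e' := by
  classical
  have hu : (e ∪ e').card ≤ 2 := card_le_two_of_subset_isLine hR hS
    (by push_cast; exact Set.union_subset heR he'R) (by push_cast; exact Set.union_subset heS he'S)
  exact (Finset.eq_of_subset_of_card_le Finset.subset_union_left (hu.trans he.ge)).trans
    (Finset.eq_of_subset_of_card_le Finset.subset_union_right (hu.trans he'.ge)).symm

theorem disjoint_of_card_eq_two_of_subset_isLine {x : P2} (hxR : x ∉ R)
    {S S' : Set P2} (hS : IsLine S) (hS' : IsLine S') (hxS : x ∈ S) (hxS' : x ∈ S')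
    {e e' : Finset P2} (heR : ↑e ⊆ R) (he'R : ↑e' ⊆ R) (heS : ↑e ⊆ S) (he'S : ↑e' ⊆ S')
    (he : e.card = 2) (he' : e'.card = 2) (hne : e ≠ e') : Disjoint e e' := by
  refine Finset.disjoint_left.2 fun p hpe hpe' => hne ?_
  have hpx : p ≠ x := fun h => hxR (h ▸ heR hpe)
  have hSS' : S = S' := hS.eq_of_mem hS' hpx (heS hpe) hxS (he'S hpe') hxS'
  exact eq_of_card_eq_two_of_subset_isLine hR hS heR he'R heS (hSS' ▸ he'S) he he'

theorem choose_card_two_le_of_forall_isLine_mem {s t : Finset P2} (hs : ↑s ⊆ R)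
    (ht : ∀ x ∈ t, x ∉ R)
    (hjoin : ∀ p ∈ s, ∀ q ∈ s, p ≠ q → ∃ x ∈ t, ∃ S, IsLine S ∧ p ∈ S ∧ q ∈ S ∧ x ∈ S) :
    s.card.choose 2 ≤ s.card / 2 * t.card := by
  classical
  have hpair : ∀ e ∈ s.powersetCard 2, ∃ x ∈ t, ∃ S, IsLine S ∧ ↑e ⊆ S ∧ x ∈ S := by
    intro e he
    obtain ⟨hes, he2⟩ := Finset.mem_powersetCard.1 he
    obtain ⟨p, q, hpq, rfl⟩ := Finset.card_eq_two.1 he2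
    obtain ⟨x, hx, S, hS, hp, hq, hxS⟩ := hjoin p (hes (by simp)) q (hes (by simp)) hpq
    exact ⟨x, hx, S, hS, by simp [Set.insert_subset_iff, hp, hq], hxS⟩
  choose! c hct S hS heS hcS using hpair
  have hfibers : ∀ x ∈ t,
      ({e ∈ s.powersetCard 2 | c e = x} : Set (Finset P2)).PairwiseDisjoint id := by
    rintro x - e ⟨he, rfl⟩ e' ⟨he', hce'⟩ hne
    obtain ⟨hes, he2⟩ := Finset.mem_powersetCard.1 he
    obtain ⟨he's, he'2⟩ := Finset.mem_powersetCard.1 he'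
    exact disjoint_of_card_eq_two_of_subset_isLine hR (ht _ (hct e he)) (hS e he) (hS e' he')
      (hcS e he) (hce' ▸ hcS e' he') ((Finset.coe_subset.2 hes).trans hs)
      ((Finset.coe_subset.2 he's).trans hs) (heS e he) (heS e' he') he2 he'2 hne
  rw [← Finset.card_powersetCard]
  exact Finset.card_le_div_mul_card_of_pairwiseDisjoint_fibers two_pos
    (fun e he => (Finset.mem_powersetCard.1 he).1) (fun e he => (Finset.mem_powersetCard.1 he).2)
    hct hfibers

end NoThreeCollinear

theorem stmt19_general (Z : Set P2) (hcard : Z.ncard = 9)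
    (L : Set P2) (hL4 : (Z ∩ L).ncard = 4)
    (hR : ∀ p ∈ Z \ L, ∀ q ∈ Z \ L, ∀ r ∈ Z \ L,
      p ≠ q → p ≠ r → q ≠ r → ¬ Collinear3 p q r) :
    ∃ p ∈ Z \ L, ∃ q ∈ Z \ L, p ≠ q ∧
      ∃ S : Set P2, IsLine S ∧ p ∈ S ∧ q ∈ S ∧ ∀ x ∈ S ∩ L, x ∉ Z := by
  by_contra! hcon
  have hZ : Z.Finite := Set.finite_of_ncard_ne_zero (by omega)
  set R := (hZ.sdiff (t := L)).toFinset
  set T := (hZ.inter_of_left L).toFinset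
  have hR5 : R.card = 5 := by
    have := Set.ncard_inter_add_ncard_sdiff_eq_ncard Z L hZ
    rw [← Set.ncard_eq_toFinset_card _ hZ.sdiff]; omega
  have hT4 : T.card = 4 := by rw [← Set.ncard_eq_toFinset_card _ (hZ.inter_of_left L), hL4]
  have hcount := choose_card_two_le_of_forall_isLine_mem hR (s := R) (t := T)
    (Set.Finite.coe_toFinset _).subset (by simp +contextual [T]) fun p hp q hq hpq => by
      rw [Set.Finite.mem_toFinset] at hp hq
      obtain ⟨S, hS, hpS, hqS⟩ := exists_isLine_mem_mem p q
      obtain ⟨x, ⟨hxS, hxL⟩, hxZ⟩ := hcon p hp q hq hpq S hS hpS hqS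
      exact ⟨x, by simp [T, hxZ, hxL], S, hS, hpS, hqS, hxS⟩
  rw [hR5, hT4] at hcount
  norm_num [Nat.choose_two_right] at hcount

/-- If a set of nine points has exactly one 4-rich line `L`, no 5-rich lines, and no
three of the remaining five points are collinear, then two of the remaining five
points span a line meeting `L` outside of `Z`. -/
theorem stmt19 (Z : Set P2) (hcard : Z.ncard = 9)
    (L : Set P2) (hL : IsLine L) (hL4 : (Z ∩ L).ncard = 4)
    (hunique : ∀ S : Set P2, IsLine S → (Z ∩ S).ncard = 4 → S = L)
    (h5 : ∀ S : Set P2, IsLine S → (Z ∩ S).ncard ≤ 4)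
    (hR : ∀ p ∈ Z \ L, ∀ q ∈ Z \ L, ∀ r ∈ Z \ L,
      p ≠ q → p ≠ r → q ≠ r → ¬ Collinear3 p q r) :
    ∃ p ∈ Z \ L, ∃ q ∈ Z \ L, p ≠ q ∧
      ∃ S : Set P2, IsLine S ∧ p ∈ S ∧ q ∈ S ∧ ∀ x ∈ S ∩ L, x ∉ Z :=
  stmt19_general Z hcard L hL4 hR
end
end
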